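/- Let A be a bounded linear operator on a Banach space X with ‖A‖ < 1 and α > 0. Then the series S_α(n) = ∑_{j=0}^∞ k^{α(j+1)}(n) A^j converges in operator norm for each n ∈ ℕ₀, and S_α satisfies the resolvent equation S_α(n)x = k^α(n)x + A (k^α * S_α)(n)x for all n ∈ ℕ₀ and x ∈ X, where (k^α * S_α)(n)x = ∑_{j=0}^n k^α(n-j) S_α(j)x. -/

import Mathlib

/-!
For `β > 0` the weight `kk β n = Γ(β + n) / (Γ(β) n!)` is the multiset coefficient
`multichoose β n`, so the Chu–Vandermonde identity makes `β ↦ kk β` a semigroup under discrete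
convolution: `kk (a + b) = kk a ∗ kk b`. In particular `kk (α (j + 2)) = kk α ∗ kk (α (j + 1))`,
which is the resolvent equation after the `j = 0` term of `S_α(n)` is split off and one factor `A` is pulled
out of the remaining terms. Convergence holds because `kk β n ≤ (β + 1)ⁿ` is polynomial in `β`,
so the series is dominated by `∑ⱼ jⁿ ‖A‖ʲ`.
-/

noncomputable def kk (β : ℝ) (n : ℕ) : ℝ :=
  Real.Gamma (β + n) / (Real.Gamma β * Real.Gamma (n + 1))

open Finset Filter

namespace Ring

theorem multichoose_add {R : Type*} [Ring R] [BinomialRing R] {r s : R} (n : ℕ)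
    (h : Commute r s) :
    multichoose (r + s) n =
      ∑ ij ∈ antidiagonal n, multichoose r ij.1 * multichoose s ij.2 := by
  -- `choose (-r) n = (-1)ⁿ • multichoose r n` reduces this to Vandermonde for `choose`.
  have key := add_choose_eq n h.neg_left.neg_right
  rw [← neg_add, choose_neg'] at key
  simp only [choose_neg', smul_mul_smul_comm, ← Int.negOnePow_add] at key
  rw [← smul_left_cancel_iff (Int.negOnePow n), key, smul_sum]
  refine sum_congr rfl fun ij hij => ?_
  rw [← Nat.cast_add, mem_antidiagonal.mp hij]

theorem multichoose_eq_ascPochhammer_eval_div {K : Type*} [Field K] [CharZero K] (r : K)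
    (n : ℕ) : multichoose r n = (ascPochhammer K n).eval r / n.factorial := by
  rw [eq_div_iff (by exact_mod_cast n.factorial_ne_zero), mul_comm, ← nsmul_eq_mul,
    factorial_nsmul_multichoose_eq_ascPochhammer, Polynomial.ascPochhammer_smeval_eq_eval]

end Ring

theorem Real.Gamma_add_nat_eq_ascPochhammer_eval_mul {s : ℝ} (hs : ∀ m : ℕ, s ≠ -m) (n : ℕ) :
    Gamma (s + n) = (ascPochhammer ℝ n).eval s * Gamma s := by
  induction n with
  | zero => simp
  | succ n ih =>
    have hsn : s + n ≠ 0 := fun h => hs n (eq_neg_of_add_eq_zero_left h)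
    rw [Nat.cast_succ, ← add_assoc, Gamma_add_one hsn, ih, ascPochhammer_succ_eval]
    ring

theorem ascPochhammer_eval_le_factorial_mul_pow {t : ℝ} (ht : 0 ≤ t) (n : ℕ) :
    (ascPochhammer ℝ n).eval t ≤ n.factorial * (t + 1) ^ n := by
  induction n with
  | zero => simp
  | succ n ih =>
    rw [ascPochhammer_succ_eval, Nat.factorial_succ, Nat.cast_mul, pow_succ]
    calc (ascPochhammer ℝ n).eval t * (t + n)
        ≤ n.factorial * (t + 1) ^ n * ((n + 1 : ℕ) * (t + 1)) := by
          gcongr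
          push_cast
          nlinarith [(n.cast_nonneg : (0 : ℝ) ≤ n)]
      _ = _ := by ring

lemma ne_neg_natCast_of_pos {x : ℝ} (hx : 0 < x) (m : ℕ) : x ≠ -m := by
  have := m.cast_nonneg (α := ℝ)
  exact ne_of_gt (by linarith)

lemma kk_eq_ascPochhammer_eval_div {β : ℝ} (hβ : ∀ m : ℕ, β ≠ -m) (n : ℕ) :
    kk β n = (ascPochhammer ℝ n).eval β / n.factorial := by
  rw [kk, Real.Gamma_add_nat_eq_ascPochhammer_eval_mul hβ, Real.Gamma_nat_eq_factorial,
    mul_comm (Real.Gamma β), mul_div_mul_right _ _ (Real.Gamma_ne_zero hβ)]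

lemma kk_eq_multichoose {β : ℝ} (hβ : ∀ m : ℕ, β ≠ -m) (n : ℕ) :
    kk β n = Ring.multichoose β n := by
  rw [kk_eq_ascPochhammer_eval_div hβ, Ring.multichoose_eq_ascPochhammer_eval_div]

lemma kk_pos {β : ℝ} (hβ : 0 < β) (n : ℕ) : 0 < kk β n := by
  unfold kk
  have := Real.Gamma_pos_of_pos hβ
  have := Real.Gamma_pos_of_pos (by positivity : 0 < β + n)
  have := Real.Gamma_pos_of_pos (by positivity : (0 : ℝ) < n + 1)
  positivity

lemma kk_le_add_one_pow {β : ℝ} (hβ : 0 < β) (n : ℕ) : kk β n ≤ (β + 1) ^ n := by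
  rw [kk_eq_ascPochhammer_eval_div (ne_neg_natCast_of_pos hβ),
    div_le_iff₀' (by exact_mod_cast n.factorial_pos)]
  exact ascPochhammer_eval_le_factorial_mul_pow hβ.le n

lemma kk_add {a b : ℝ} (ha : 0 < a) (hb : 0 < b) (n : ℕ) :
    kk (a + b) n = ∑ j ∈ range (n + 1), kk a (n - j) * kk b j := by
  rw [kk_eq_multichoose (ne_neg_natCast_of_pos (add_pos ha hb)), add_comm,
    Ring.multichoose_add n (Commute.all _ _),
    Nat.sum_antidiagonal_eq_sum_range_succ (fun i j => Ring.multichoose b i * Ring.multichoose a j)]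
  refine sum_congr rfl fun j _ => ?_
  rw [kk_eq_multichoose (ne_neg_natCast_of_pos ha), kk_eq_multichoose (ne_neg_natCast_of_pos hb),
    mul_comm]

section ResolventSeries

variable {R : Type*} [NormedRing R] [NormedAlgebra ℝ R] [CompleteSpace R]

noncomputable def resolventSeries (α : ℝ) (a : R) (n : ℕ) : R :=
  ∑' j : ℕ, kk (α * (j + 1)) n • a ^ j

variable {α : ℝ} {a : R}

lemma summable_kk_smul_pow (hα : 0 < α) (ha : ‖a‖ < 1) (n : ℕ) :
    Summable fun j : ℕ => kk (α * (j + 1)) n • a ^ j := by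
  have hgeom := summable_pow_mul_geometric_of_norm_lt_one n (r := ‖a‖) (by rwa [norm_norm])
  refine .of_norm_bounded_eventually_nat (hgeom.mul_left ((2 * α + 1) ^ n)) ?_
  filter_upwards [eventually_ge_atTop 1] with j hj
  have hj' : (1 : ℝ) ≤ j := by exact_mod_cast hj
  have hβ : 0 < α * (j + 1) := by positivity
  calc ‖kk (α * (j + 1)) n • a ^ j‖ = kk (α * (j + 1)) n * ‖a ^ j‖ := by
        rw [norm_smul, Real.norm_of_nonneg (kk_pos hβ n).le]
    _ ≤ ((2 * α + 1) * j) ^ n * ‖a‖ ^ j := by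
        gcongr
        · refine (kk_le_add_one_pow hβ n).trans (pow_le_pow_left₀ (by positivity) ?_ n)
          nlinarith
        · exact norm_pow_le' a (by omega)
    _ = (2 * α + 1) ^ n * ((j : ℝ) ^ n * ‖a‖ ^ j) := by rw [mul_pow]; ring

lemma resolventSeries_eq (hα : 0 < α) (ha : ‖a‖ < 1) (n : ℕ) :
    resolventSeries α a n =
      kk α n • 1 + a * ∑ j ∈ range (n + 1), kk α (n - j) • resolventSeries α a j := by
  set f : ℕ → R := fun j => kk (α * (j + 1)) n • a ^ j
  set T := ∑ j ∈ range (n + 1), kk α (n - j) • resolventSeries α a j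
  have hterm : (fun i => f (i + 1)) = fun i : ℕ =>
      a * ∑ j ∈ range (n + 1), kk α (n - j) • kk (α * (i + 1)) j • a ^ i := by
    funext i
    simp only [f, smul_smul, ← sum_smul, mul_smul_comm, ← pow_succ']
    rw [← kk_add hα (by positivity)]
    congr 2
    push_cast
    ring
  have hshift : HasSum (fun i => f (i + 1)) (a * T) := by
    rw [hterm]
    exact (hasSum_sum fun j _ =>
      ((summable_kk_smul_pow hα ha j).hasSum.const_smul (kk α (n - j)))).mul_left a
  have hf : HasSum f (a * T + f 0) :=
    (hasSum_nat_add_iff' 1).mp (by rwa [sum_range_one, add_sub_cancel_right])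
  rw [resolventSeries, hf.tsum_eq, add_comm]
  simp [f]

end ResolventSeries

theorem stmt18 (X : Type*) [NormedAddCommGroup X] [NormedSpace ℝ X] [CompleteSpace X]
    (A : X →L[ℝ] X) (hA : ‖A‖ < 1) (α : ℝ) (hα : 0 < α) :
    (∀ n : ℕ, Summable (fun j : ℕ => kk (α * (j + 1)) n • A ^ j)) ∧
    ∀ n : ℕ, ∀ x : X,
      (∑' j : ℕ, kk (α * (j + 1)) n • A ^ j) x =
        kk α n • x +
          A (∑ j ∈ Finset.range (n + 1),
              kk α (n - j) • (∑' i : ℕ, kk (α * (i + 1)) j • A ^ i) x) := by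
  refine ⟨summable_kk_smul_pow hα hA, fun n x => ?_⟩
  simpa [resolventSeries] using congr($(resolventSeries_eq hα hA n) x)
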